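/- arXiv:2305.02222 — 2 statements merged into one kernel-verified Lean document; each statement's English description precedes it below -/
import Mathlib

section
/- On ℝ² with Lorentzian inverse metric g^{μν} = (φ₁₂(y¹)−φ₂₂(y²))⁻¹ diag(1,−1), where φ₁₂(y¹) ≠ φ₂₂(y²) everywhere, the functions F₁ = (φ₂₂ p₁² − φ₁₂ p₂²)/(φ₁₂−φ₂₂) and F₂ = (p₁² − p₂²)/(φ₁₂−φ₂₂) are in involution: their canonical Poisson bracket vanishes identically. -/
open scoped BigOperators

noncomputable section

/-- Canonical Poisson bracket on the phase space `ℝⁿ × ℝⁿ`. -/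
def poissonBracket {n : ℕ} (F G : (Fin n → ℝ) × (Fin n → ℝ) → ℝ)
    (z : (Fin n → ℝ) × (Fin n → ℝ)) : ℝ :=
  ∑ α : Fin n,
    (fderiv ℝ F z (Pi.single α (1 : ℝ), 0) * fderiv ℝ G z (0, Pi.single α (1 : ℝ))
      - fderiv ℝ F z (0, Pi.single α (1 : ℝ)) * fderiv ℝ G z (Pi.single α (1 : ℝ), 0))

set_option maxHeartbeats 2000000 in
/-- for the conformally Lorentzian metric
`g^{μν} = (φ₁₂(y¹) − φ₂₂(y²))⁻¹ diag(1,−1)` on `ℝ²`, the quadratic conservation laws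
`F₁ = (φ₂₂ p₁² − φ₁₂ p₂²)/(φ₁₂−φ₂₂)` and `F₂ = (p₁² − p₂²)/(φ₁₂−φ₂₂)` are in
involution: their canonical Poisson bracket vanishes identically. -/
theorem lorentz_liouville_plane_involution
    (φ₁₂ φ₂₂ : ℝ → ℝ) (hφ₁₂ : ContDiff ℝ (⊤ : ℕ∞) φ₁₂) (hφ₂₂ : ContDiff ℝ (⊤ : ℕ∞) φ₂₂)
    (hne : ∀ y₁ y₂ : ℝ, φ₁₂ y₁ ≠ φ₂₂ y₂)
    (F₁ F₂ : (Fin 2 → ℝ) × (Fin 2 → ℝ) → ℝ)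
    (hF₁ : ∀ z, F₁ z = (φ₂₂ (z.1 1) * z.2 0 ^ 2 - φ₁₂ (z.1 0) * z.2 1 ^ 2) /
        (φ₁₂ (z.1 0) - φ₂₂ (z.1 1)))
    (hF₂ : ∀ z, F₂ z = (z.2 0 ^ 2 - z.2 1 ^ 2) / (φ₁₂ (z.1 0) - φ₂₂ (z.1 1))) :
    ∀ z, poissonBracket F₁ F₂ z = 0 := by
  have hE₁ : F₁ = fun z => (φ₂₂ (z.1 1) * z.2 0 ^ 2 - φ₁₂ (z.1 0) * z.2 1 ^ 2) /
      (φ₁₂ (z.1 0) - φ₂₂ (z.1 1)) := funext hF₁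
  have hE₂ : F₂ = fun z => (z.2 0 ^ 2 - z.2 1 ^ 2) / (φ₁₂ (z.1 0) - φ₂₂ (z.1 1)) :=
    funext hF₂
  subst hE₁ hE₂
  intro z
  -- coordinate projections as continuous linear maps
  set Y0 : ((Fin 2 → ℝ) × (Fin 2 → ℝ)) →L[ℝ] ℝ :=
    (ContinuousLinearMap.proj 0).comp (ContinuousLinearMap.fst ℝ (Fin 2 → ℝ) (Fin 2 → ℝ))
    with hY0def
  set Y1 : ((Fin 2 → ℝ) × (Fin 2 → ℝ)) →L[ℝ] ℝ :=
    (ContinuousLinearMap.proj 1).comp (ContinuousLinearMap.fst ℝ (Fin 2 → ℝ) (Fin 2 → ℝ))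
    with hY1def
  set P0 : ((Fin 2 → ℝ) × (Fin 2 → ℝ)) →L[ℝ] ℝ :=
    (ContinuousLinearMap.proj 0).comp (ContinuousLinearMap.snd ℝ (Fin 2 → ℝ) (Fin 2 → ℝ))
    with hP0def
  set P1 : ((Fin 2 → ℝ) × (Fin 2 → ℝ)) →L[ℝ] ℝ :=
    (ContinuousLinearMap.proj 1).comp (ContinuousLinearMap.snd ℝ (Fin 2 → ℝ) (Fin 2 → ℝ))
    with hP1def
  -- abbreviations at the point z
  set a := φ₁₂ (z.1 0) with ha
  set b := φ₂₂ (z.1 1) with hb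
  set a' := deriv φ₁₂ (z.1 0) with ha'
  set b' := deriv φ₂₂ (z.1 1) with hb'
  set p := z.2 0 with hp
  set q := z.2 1 with hq
  have hd : a - b ≠ 0 := sub_ne_zero.mpr (hne _ _)
  -- derivatives of the building blocks
  have hA : HasFDerivAt (fun w : (Fin 2 → ℝ) × (Fin 2 → ℝ) => φ₁₂ (w.1 0)) (a' • Y0) z :=
    ((hφ₁₂.differentiable (by simp)).differentiableAt.hasDerivAt).comp_hasFDerivAt z
      Y0.hasFDerivAt
  have hB : HasFDerivAt (fun w : (Fin 2 → ℝ) × (Fin 2 → ℝ) => φ₂₂ (w.1 1)) (b' • Y1) z :=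
    ((hφ₂₂.differentiable (by simp)).differentiableAt.hasDerivAt).comp_hasFDerivAt z
      Y1.hasFDerivAt
  have hP0sq : HasFDerivAt (fun w : (Fin 2 → ℝ) × (Fin 2 → ℝ) => w.2 0 ^ 2) ((2 * p) • P0) z := by
    have h1 : HasDerivAt (fun t : ℝ => t ^ 2) (2 * p) p := by
      simpa using hasDerivAt_pow 2 p
    exact h1.comp_hasFDerivAt z P0.hasFDerivAt
  have hP1sq : HasFDerivAt (fun w : (Fin 2 → ℝ) × (Fin 2 → ℝ) => w.2 1 ^ 2) ((2 * q) • P1) z := by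
    have h1 : HasDerivAt (fun t : ℝ => t ^ 2) (2 * q) q := by
      simpa using hasDerivAt_pow 2 q
    exact h1.comp_hasFDerivAt z P1.hasFDerivAt
  -- denominator and its inverse
  have hDen : HasFDerivAt (fun w : (Fin 2 → ℝ) × (Fin 2 → ℝ) => φ₁₂ (w.1 0) - φ₂₂ (w.1 1)) (a' • Y0 - b' • Y1) z :=
    hA.sub hB
  have hInv : HasFDerivAt (fun w : (Fin 2 → ℝ) × (Fin 2 → ℝ) => (φ₁₂ (w.1 0) - φ₂₂ (w.1 1))⁻¹)
      ((-((a - b) ^ 2)⁻¹) • (a' • Y0 - b' • Y1)) z :=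
    (hasDerivAt_inv hd).comp_hasFDerivAt z hDen
  -- numerators
  have hN₁ : HasFDerivAt (fun w : (Fin 2 → ℝ) × (Fin 2 → ℝ) => φ₂₂ (w.1 1) * w.2 0 ^ 2 - φ₁₂ (w.1 0) * w.2 1 ^ 2)
      ((b • ((2 * p) • P0) + (p ^ 2) • (b' • Y1)) -
        (a • ((2 * q) • P1) + (q ^ 2) • (a' • Y0))) z :=
    (hB.mul hP0sq).sub (hA.mul hP1sq)
  have hN₂ : HasFDerivAt (fun w : (Fin 2 → ℝ) × (Fin 2 → ℝ) => w.2 0 ^ 2 - w.2 1 ^ 2)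
      ((2 * p) • P0 - (2 * q) • P1) z := hP0sq.sub hP1sq
  -- the two functions, written as products with the inverse denominator
  have hG₁ : HasFDerivAt
      (fun w : (Fin 2 → ℝ) × (Fin 2 → ℝ) => (φ₂₂ (w.1 1) * w.2 0 ^ 2 - φ₁₂ (w.1 0) * w.2 1 ^ 2) /
        (φ₁₂ (w.1 0) - φ₂₂ (w.1 1)))
      ((b * p ^ 2 - a * q ^ 2) • ((-((a - b) ^ 2)⁻¹) • (a' • Y0 - b' • Y1)) +
        ((a - b)⁻¹) • ((b • ((2 * p) • P0) + (p ^ 2) • (b' • Y1)) -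
          (a • ((2 * q) • P1) + (q ^ 2) • (a' • Y0)))) z := by
    simp only [div_eq_mul_inv]; exact hN₁.mul hInv
  have hG₂ : HasFDerivAt
      (fun w : (Fin 2 → ℝ) × (Fin 2 → ℝ) => (w.2 0 ^ 2 - w.2 1 ^ 2) / (φ₁₂ (w.1 0) - φ₂₂ (w.1 1)))
      ((p ^ 2 - q ^ 2) • ((-((a - b) ^ 2)⁻¹) • (a' • Y0 - b' • Y1)) +
        ((a - b)⁻¹) • ((2 * p) • P0 - (2 * q) • P1)) z := by
    simp only [div_eq_mul_inv]; exact hN₂.mul hInv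
  -- compute the bracket
  rw [poissonBracket, Fin.sum_univ_two, hG₁.fderiv, hG₂.fderiv]
  have e00 : Y0 (Pi.single 0 (1 : ℝ), (0 : Fin 2 → ℝ)) = 1 := by
    simp [hY0def]
  have e01 : Y0 (Pi.single 1 (1 : ℝ), (0 : Fin 2 → ℝ)) = 0 := by
    simp [hY0def]
  have e10 : Y1 (Pi.single 0 (1 : ℝ), (0 : Fin 2 → ℝ)) = 0 := by
    simp [hY1def]
  have e11 : Y1 (Pi.single 1 (1 : ℝ), (0 : Fin 2 → ℝ)) = 1 := by
    simp [hY1def]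
  have f00 : P0 ((0 : Fin 2 → ℝ), Pi.single 0 (1 : ℝ)) = 1 := by
    simp [hP0def]
  have f01 : P0 ((0 : Fin 2 → ℝ), Pi.single 1 (1 : ℝ)) = 0 := by
    simp [hP0def]
  have f10 : P1 ((0 : Fin 2 → ℝ), Pi.single 0 (1 : ℝ)) = 0 := by
    simp [hP1def]
  have f11 : P1 ((0 : Fin 2 → ℝ), Pi.single 1 (1 : ℝ)) = 1 := by
    simp [hP1def]
  have g0 : ∀ w : Fin 2 → ℝ, Y0 ((0 : Fin 2 → ℝ), w) = 0 := by
    intro w; simp [hY0def]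
  have g1 : ∀ w : Fin 2 → ℝ, Y1 ((0 : Fin 2 → ℝ), w) = 0 := by
    intro w; simp [hY1def]
  have g2 : ∀ v : Fin 2 → ℝ, P0 (v, (0 : Fin 2 → ℝ)) = 0 := by
    intro v; simp [hP0def]
  have g3 : ∀ v : Fin 2 → ℝ, P1 (v, (0 : Fin 2 → ℝ)) = 0 := by
    intro v; simp [hP1def]
  simp only [ContinuousLinearMap.add_apply, ContinuousLinearMap.smul_apply,
    ContinuousLinearMap.sub_apply, e00, e01, e10, e11, f00, f01, f10, f11,
    g0, g1, g2, g3, smul_eq_mul]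
  field_simp
  ring
end
end

section
/- On ℝ³ with coordinates (x, y, z) and inverse metric g^{**} = (1−φ₂(y)φ₃(z))⁻¹ · [[−k₂(y), 0, −φ₂/2],[0, 1, 0],[−φ₂/2, 0, 0]], with φ₂ ≠ 0 and φ₂φ₃ ≠ 1 everywhere, the three functions F₁ = p₁, F₂ = (p₂² − k₂ p₁² − φ₂ p₁ p₃)/(1−φ₂φ₃), and F₃ = (−φ₃(p₂² − k₂ p₁²) + p₁ p₃)/(1−φ₂φ₃) are pairwise in involution under the canonical Poisson bracket, and F₂ = 2H₀ for the geodesic Hamiltonian H₀ of g. -/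
open scoped BigOperators
open Matrix

noncomputable section

abbrev E3 := (Fin 3 → ℝ) × (Fin 3 → ℝ)

def Qc (i : Fin 3) : E3 →L[ℝ] ℝ :=
  (ContinuousLinearMap.proj i).comp (ContinuousLinearMap.fst ℝ (Fin 3 → ℝ) (Fin 3 → ℝ))
def Pc (i : Fin 3) : E3 →L[ℝ] ℝ :=
  (ContinuousLinearMap.proj i).comp (ContinuousLinearMap.snd ℝ (Fin 3 → ℝ) (Fin 3 → ℝ))

lemma F1_apply (z : E3) (v : E3) : fderiv ℝ (fun w : E3 => w.2 0) z v = v.2 0 := by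
  have h : HasFDerivAt (fun w : E3 => w.2 0) (Pc 0) z := (Pc 0).hasFDerivAt
  rw [h.fderiv]; simp [Pc]

lemma F2_apply (k₂ φ₂ φ₃ : ℝ → ℝ) (hk : Differentiable ℝ k₂) (hb : Differentiable ℝ φ₂)
    (hc : Differentiable ℝ φ₃) (z : E3)
    (hD : (1 - φ₂ (z.1 1) * φ₃ (z.1 2)) ≠ 0) (v : E3) :
    fderiv ℝ (fun w : E3 => (w.2 1 ^ 2 - k₂ (w.1 1) * w.2 0 ^ 2
        - φ₂ (w.1 1) * w.2 0 * w.2 2) / (1 - φ₂ (w.1 1) * φ₃ (w.1 2))) z v =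
      (((-(deriv k₂ (z.1 1)) * z.2 0 ^ 2 - deriv φ₂ (z.1 1) * z.2 0 * z.2 2)
          * (1 - φ₂ (z.1 1) * φ₃ (z.1 2))
        + (z.2 1 ^ 2 - k₂ (z.1 1) * z.2 0 ^ 2 - φ₂ (z.1 1) * z.2 0 * z.2 2)
          * (deriv φ₂ (z.1 1) * φ₃ (z.1 2))) / (1 - φ₂ (z.1 1) * φ₃ (z.1 2)) ^ 2) * v.1 1
      + (((z.2 1 ^ 2 - k₂ (z.1 1) * z.2 0 ^ 2 - φ₂ (z.1 1) * z.2 0 * z.2 2)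
          * (φ₂ (z.1 1) * deriv φ₃ (z.1 2))) / (1 - φ₂ (z.1 1) * φ₃ (z.1 2)) ^ 2) * v.1 2
      + ((-(2 * k₂ (z.1 1) * z.2 0) - φ₂ (z.1 1) * z.2 2) / (1 - φ₂ (z.1 1) * φ₃ (z.1 2))) * v.2 0
      + (2 * z.2 1 / (1 - φ₂ (z.1 1) * φ₃ (z.1 2))) * v.2 1
      + (-(φ₂ (z.1 1) * z.2 0) / (1 - φ₂ (z.1 1) * φ₃ (z.1 2))) * v.2 2 := by
  have hq1 : HasFDerivAt (fun w : E3 => w.1 1) (Qc 1) z := (Qc 1).hasFDerivAt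
  have hq2 : HasFDerivAt (fun w : E3 => w.1 2) (Qc 2) z := (Qc 2).hasFDerivAt
  have hp0 : HasFDerivAt (fun w : E3 => w.2 0) (Pc 0) z := (Pc 0).hasFDerivAt
  have hp1 : HasFDerivAt (fun w : E3 => w.2 1) (Pc 1) z := (Pc 1).hasFDerivAt
  have hp2 : HasFDerivAt (fun w : E3 => w.2 2) (Pc 2) z := (Pc 2).hasFDerivAt
  have hK : HasFDerivAt (fun w : E3 => k₂ (w.1 1)) (deriv k₂ (z.1 1) • Qc 1) z :=
    HasDerivAt.comp_hasFDerivAt z (hk _).hasDerivAt hq1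
  have hB : HasFDerivAt (fun w : E3 => φ₂ (w.1 1)) (deriv φ₂ (z.1 1) • Qc 1) z :=
    HasDerivAt.comp_hasFDerivAt z (hb _).hasDerivAt hq1
  have hC : HasFDerivAt (fun w : E3 => φ₃ (w.1 2)) (deriv φ₃ (z.1 2) • Qc 2) z :=
    HasDerivAt.comp_hasFDerivAt z (hc _).hasDerivAt hq2
  have hp1sq : HasFDerivAt (fun w : E3 => w.2 1 ^ 2) (z.2 1 • Pc 1 + z.2 1 • Pc 1) z := by
    simpa [sq] using hp1.fun_mul hp1
  have hp0sq : HasFDerivAt (fun w : E3 => w.2 0 ^ 2) (z.2 0 • Pc 0 + z.2 0 • Pc 0) z := by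
    simpa [sq] using hp0.fun_mul hp0
  have hnum : HasFDerivAt (fun w : E3 => w.2 1 ^ 2 - k₂ (w.1 1) * w.2 0 ^ 2
      - φ₂ (w.1 1) * w.2 0 * w.2 2) _ z :=
    (hp1sq.sub (hK.mul hp0sq)).sub ((hB.mul hp0).mul hp2)
  have hden : HasFDerivAt (fun w : E3 => 1 - φ₂ (w.1 1) * φ₃ (w.1 2)) _ z :=
    (hasFDerivAt_const (1:ℝ) z).sub (hB.mul hC)
  have hinv : HasFDerivAt (fun w : E3 => (1 - φ₂ (w.1 1) * φ₃ (w.1 2))⁻¹)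
      ((-((1 - φ₂ (z.1 1) * φ₃ (z.1 2)) ^ 2)⁻¹) • (0 - (φ₂ (z.1 1) • deriv φ₃ (z.1 2) • Qc 2
        + φ₃ (z.1 2) • deriv φ₂ (z.1 1) • Qc 1))) z :=
    HasDerivAt.comp_hasFDerivAt z (hasDerivAt_inv hD) hden
  have h := hnum.fun_mul hinv
  simp only [div_eq_mul_inv]
  rw [h.fderiv]
  simp only [ContinuousLinearMap.add_apply, ContinuousLinearMap.sub_apply,
    ContinuousLinearMap.smul_apply, ContinuousLinearMap.comp_apply,
    ContinuousLinearMap.proj_apply, ContinuousLinearMap.coe_fst',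
    ContinuousLinearMap.coe_snd', ContinuousLinearMap.zero_apply, Qc, Pc,
    smul_eq_mul, Pi.mul_apply, Pi.sub_apply, Pi.neg_apply]
  field_simp
  ring

lemma F3_apply (k₂ φ₂ φ₃ : ℝ → ℝ) (hk : Differentiable ℝ k₂) (hb : Differentiable ℝ φ₂)
    (hc : Differentiable ℝ φ₃) (z : E3)
    (hD : (1 - φ₂ (z.1 1) * φ₃ (z.1 2)) ≠ 0) (v : E3) :
    fderiv ℝ (fun w : E3 => (-(φ₃ (w.1 2)) * (w.2 1 ^ 2 - k₂ (w.1 1) * w.2 0 ^ 2)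
        + w.2 0 * w.2 2) / (1 - φ₂ (w.1 1) * φ₃ (w.1 2))) z v =
      (((φ₃ (z.1 2) * deriv k₂ (z.1 1) * z.2 0 ^ 2) * (1 - φ₂ (z.1 1) * φ₃ (z.1 2))
        + (-(φ₃ (z.1 2)) * (z.2 1 ^ 2 - k₂ (z.1 1) * z.2 0 ^ 2) + z.2 0 * z.2 2)
          * (deriv φ₂ (z.1 1) * φ₃ (z.1 2))) / (1 - φ₂ (z.1 1) * φ₃ (z.1 2)) ^ 2) * v.1 1
      + (((-(deriv φ₃ (z.1 2)) * (z.2 1 ^ 2 - k₂ (z.1 1) * z.2 0 ^ 2))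
          * (1 - φ₂ (z.1 1) * φ₃ (z.1 2))
        + (-(φ₃ (z.1 2)) * (z.2 1 ^ 2 - k₂ (z.1 1) * z.2 0 ^ 2) + z.2 0 * z.2 2)
          * (φ₂ (z.1 1) * deriv φ₃ (z.1 2))) / (1 - φ₂ (z.1 1) * φ₃ (z.1 2)) ^ 2) * v.1 2
      + ((2 * φ₃ (z.1 2) * k₂ (z.1 1) * z.2 0 + z.2 2) / (1 - φ₂ (z.1 1) * φ₃ (z.1 2))) * v.2 0
      + (-(2 * φ₃ (z.1 2) * z.2 1) / (1 - φ₂ (z.1 1) * φ₃ (z.1 2))) * v.2 1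
      + (z.2 0 / (1 - φ₂ (z.1 1) * φ₃ (z.1 2))) * v.2 2 := by
  have hq1 : HasFDerivAt (fun w : E3 => w.1 1) (Qc 1) z := (Qc 1).hasFDerivAt
  have hq2 : HasFDerivAt (fun w : E3 => w.1 2) (Qc 2) z := (Qc 2).hasFDerivAt
  have hp0 : HasFDerivAt (fun w : E3 => w.2 0) (Pc 0) z := (Pc 0).hasFDerivAt
  have hp1 : HasFDerivAt (fun w : E3 => w.2 1) (Pc 1) z := (Pc 1).hasFDerivAt
  have hp2 : HasFDerivAt (fun w : E3 => w.2 2) (Pc 2) z := (Pc 2).hasFDerivAt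
  have hK : HasFDerivAt (fun w : E3 => k₂ (w.1 1)) (deriv k₂ (z.1 1) • Qc 1) z :=
    HasDerivAt.comp_hasFDerivAt z (hk _).hasDerivAt hq1
  have hB : HasFDerivAt (fun w : E3 => φ₂ (w.1 1)) (deriv φ₂ (z.1 1) • Qc 1) z :=
    HasDerivAt.comp_hasFDerivAt z (hb _).hasDerivAt hq1
  have hC : HasFDerivAt (fun w : E3 => φ₃ (w.1 2)) (deriv φ₃ (z.1 2) • Qc 2) z :=
    HasDerivAt.comp_hasFDerivAt z (hc _).hasDerivAt hq2
  have hp1sq : HasFDerivAt (fun w : E3 => w.2 1 ^ 2) (z.2 1 • Pc 1 + z.2 1 • Pc 1) z := by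
    simpa [sq] using hp1.fun_mul hp1
  have hp0sq : HasFDerivAt (fun w : E3 => w.2 0 ^ 2) (z.2 0 • Pc 0 + z.2 0 • Pc 0) z := by
    simpa [sq] using hp0.fun_mul hp0
  have hnum : HasFDerivAt (fun w : E3 => -(φ₃ (w.1 2)) * (w.2 1 ^ 2 - k₂ (w.1 1) * w.2 0 ^ 2)
      + w.2 0 * w.2 2) _ z :=
    ((hC.neg).mul (hp1sq.sub (hK.mul hp0sq))).add (hp0.mul hp2)
  have hden : HasFDerivAt (fun w : E3 => 1 - φ₂ (w.1 1) * φ₃ (w.1 2)) _ z :=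
    (hasFDerivAt_const (1:ℝ) z).sub (hB.mul hC)
  have hinv : HasFDerivAt (fun w : E3 => (1 - φ₂ (w.1 1) * φ₃ (w.1 2))⁻¹)
      ((-((1 - φ₂ (z.1 1) * φ₃ (z.1 2)) ^ 2)⁻¹) • (0 - (φ₂ (z.1 1) • deriv φ₃ (z.1 2) • Qc 2
        + φ₃ (z.1 2) • deriv φ₂ (z.1 1) • Qc 1))) z :=
    HasDerivAt.comp_hasFDerivAt z (hasDerivAt_inv hD) hden
  have h := hnum.fun_mul hinv
  simp only [div_eq_mul_inv]
  rw [h.fderiv]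
  simp only [ContinuousLinearMap.add_apply, ContinuousLinearMap.sub_apply,
    ContinuousLinearMap.neg_apply, ContinuousLinearMap.smul_apply,
    ContinuousLinearMap.comp_apply, ContinuousLinearMap.proj_apply,
    ContinuousLinearMap.coe_fst', ContinuousLinearMap.coe_snd',
    ContinuousLinearMap.zero_apply, Qc, Pc, smul_eq_mul, Pi.mul_apply, Pi.sub_apply,
    Pi.neg_apply]
  field_simp
  ring


lemma bracket12 (k₂ φ₂ φ₃ : ℝ → ℝ) (hk : Differentiable ℝ k₂) (hb : Differentiable ℝ φ₂)
    (hc : Differentiable ℝ φ₃) (z : E3) (hD : (1 - φ₂ (z.1 1) * φ₃ (z.1 2)) ≠ 0) :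
    poissonBracket (fun w : E3 => w.2 0)
      (fun w : E3 => (w.2 1 ^ 2 - k₂ (w.1 1) * w.2 0 ^ 2
        - φ₂ (w.1 1) * w.2 0 * w.2 2) / (1 - φ₂ (w.1 1) * φ₃ (w.1 2))) z = 0 := by
  have Aq0 : fderiv ℝ (fun w : E3 => (w.2 1 ^ 2 - k₂ (w.1 1) * w.2 0 ^ 2
      - φ₂ (w.1 1) * w.2 0 * w.2 2) / (1 - φ₂ (w.1 1) * φ₃ (w.1 2))) z (Pi.single 0 1, 0) = 0 := by
    rw [F2_apply k₂ φ₂ φ₃ hk hb hc z hD]; simp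
  simp only [poissonBracket, Fin.sum_univ_three, F1_apply, Aq0]
  simp

lemma bracket13 (k₂ φ₂ φ₃ : ℝ → ℝ) (hk : Differentiable ℝ k₂) (hb : Differentiable ℝ φ₂)
    (hc : Differentiable ℝ φ₃) (z : E3) (hD : (1 - φ₂ (z.1 1) * φ₃ (z.1 2)) ≠ 0) :
    poissonBracket (fun w : E3 => w.2 0)
      (fun w : E3 => (-(φ₃ (w.1 2)) * (w.2 1 ^ 2 - k₂ (w.1 1) * w.2 0 ^ 2)
        + w.2 0 * w.2 2) / (1 - φ₂ (w.1 1) * φ₃ (w.1 2))) z = 0 := by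
  have Bq0 : fderiv ℝ (fun w : E3 => (-(φ₃ (w.1 2)) * (w.2 1 ^ 2 - k₂ (w.1 1) * w.2 0 ^ 2)
      + w.2 0 * w.2 2) / (1 - φ₂ (w.1 1) * φ₃ (w.1 2))) z (Pi.single 0 1, 0) = 0 := by
    rw [F3_apply k₂ φ₂ φ₃ hk hb hc z hD]; simp
  simp only [poissonBracket, Fin.sum_univ_three, F1_apply, Bq0]
  simp

set_option maxHeartbeats 1000000 in
lemma bracket23 (k₂ φ₂ φ₃ : ℝ → ℝ) (hk : Differentiable ℝ k₂) (hb : Differentiable ℝ φ₂)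
    (hc : Differentiable ℝ φ₃) (z : E3) (hD : (1 - φ₂ (z.1 1) * φ₃ (z.1 2)) ≠ 0) :
    poissonBracket (fun w : E3 => (w.2 1 ^ 2 - k₂ (w.1 1) * w.2 0 ^ 2 - φ₂ (w.1 1) * w.2 0 * w.2 2) / (1 - φ₂ (w.1 1) * φ₃ (w.1 2))) (fun w : E3 => (-(φ₃ (w.1 2)) * (w.2 1 ^ 2 - k₂ (w.1 1) * w.2 0 ^ 2) + w.2 0 * w.2 2) / (1 - φ₂ (w.1 1) * φ₃ (w.1 2))) z = 0 := by
  have Aq0 : fderiv ℝ (fun w : E3 => (w.2 1 ^ 2 - k₂ (w.1 1) * w.2 0 ^ 2 - φ₂ (w.1 1) * w.2 0 * w.2 2) / (1 - φ₂ (w.1 1) * φ₃ (w.1 2))) z (Pi.single 0 1, 0) = 0 := by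
    rw [F2_apply k₂ φ₂ φ₃ hk hb hc z hD]; simp; try ring
  have Aq1 : fderiv ℝ (fun w : E3 => (w.2 1 ^ 2 - k₂ (w.1 1) * w.2 0 ^ 2 - φ₂ (w.1 1) * w.2 0 * w.2 2) / (1 - φ₂ (w.1 1) * φ₃ (w.1 2))) z (Pi.single 1 1, 0) = (((-(deriv k₂ (z.1 1)) * z.2 0 ^ 2 - deriv φ₂ (z.1 1) * z.2 0 * z.2 2) * (1 - φ₂ (z.1 1) * φ₃ (z.1 2)) + (z.2 1 ^ 2 - k₂ (z.1 1) * z.2 0 ^ 2 - φ₂ (z.1 1) * z.2 0 * z.2 2) * (deriv φ₂ (z.1 1) * φ₃ (z.1 2))) / (1 - φ₂ (z.1 1) * φ₃ (z.1 2)) ^ 2) := by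
    rw [F2_apply k₂ φ₂ φ₃ hk hb hc z hD]; simp; try ring
  have Aq2 : fderiv ℝ (fun w : E3 => (w.2 1 ^ 2 - k₂ (w.1 1) * w.2 0 ^ 2 - φ₂ (w.1 1) * w.2 0 * w.2 2) / (1 - φ₂ (w.1 1) * φ₃ (w.1 2))) z (Pi.single 2 1, 0) = (((z.2 1 ^ 2 - k₂ (z.1 1) * z.2 0 ^ 2 - φ₂ (z.1 1) * z.2 0 * z.2 2) * (φ₂ (z.1 1) * deriv φ₃ (z.1 2))) / (1 - φ₂ (z.1 1) * φ₃ (z.1 2)) ^ 2) := by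
    rw [F2_apply k₂ φ₂ φ₃ hk hb hc z hD]; simp; try ring
  have Ap0 : fderiv ℝ (fun w : E3 => (w.2 1 ^ 2 - k₂ (w.1 1) * w.2 0 ^ 2 - φ₂ (w.1 1) * w.2 0 * w.2 2) / (1 - φ₂ (w.1 1) * φ₃ (w.1 2))) z (0, Pi.single 0 1) = ((-(2 * k₂ (z.1 1) * z.2 0) - φ₂ (z.1 1) * z.2 2) / (1 - φ₂ (z.1 1) * φ₃ (z.1 2))) := by
    rw [F2_apply k₂ φ₂ φ₃ hk hb hc z hD]; simp; try ring
  have Ap1 : fderiv ℝ (fun w : E3 => (w.2 1 ^ 2 - k₂ (w.1 1) * w.2 0 ^ 2 - φ₂ (w.1 1) * w.2 0 * w.2 2) / (1 - φ₂ (w.1 1) * φ₃ (w.1 2))) z (0, Pi.single 1 1) = ((2 * z.2 1) / (1 - φ₂ (z.1 1) * φ₃ (z.1 2))) := by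
    rw [F2_apply k₂ φ₂ φ₃ hk hb hc z hD]; simp; try ring
  have Ap2 : fderiv ℝ (fun w : E3 => (w.2 1 ^ 2 - k₂ (w.1 1) * w.2 0 ^ 2 - φ₂ (w.1 1) * w.2 0 * w.2 2) / (1 - φ₂ (w.1 1) * φ₃ (w.1 2))) z (0, Pi.single 2 1) = ((-(φ₂ (z.1 1) * z.2 0)) / (1 - φ₂ (z.1 1) * φ₃ (z.1 2))) := by
    rw [F2_apply k₂ φ₂ φ₃ hk hb hc z hD]; simp; try ring
  have Bq0 : fderiv ℝ (fun w : E3 => (-(φ₃ (w.1 2)) * (w.2 1 ^ 2 - k₂ (w.1 1) * w.2 0 ^ 2) + w.2 0 * w.2 2) / (1 - φ₂ (w.1 1) * φ₃ (w.1 2))) z (Pi.single 0 1, 0) = 0 := by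
    rw [F3_apply k₂ φ₂ φ₃ hk hb hc z hD]; simp; try ring
  have Bq1 : fderiv ℝ (fun w : E3 => (-(φ₃ (w.1 2)) * (w.2 1 ^ 2 - k₂ (w.1 1) * w.2 0 ^ 2) + w.2 0 * w.2 2) / (1 - φ₂ (w.1 1) * φ₃ (w.1 2))) z (Pi.single 1 1, 0) = (((φ₃ (z.1 2) * deriv k₂ (z.1 1) * z.2 0 ^ 2) * (1 - φ₂ (z.1 1) * φ₃ (z.1 2)) + (-(φ₃ (z.1 2)) * (z.2 1 ^ 2 - k₂ (z.1 1) * z.2 0 ^ 2) + z.2 0 * z.2 2) * (deriv φ₂ (z.1 1) * φ₃ (z.1 2))) / (1 - φ₂ (z.1 1) * φ₃ (z.1 2)) ^ 2) := by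
    rw [F3_apply k₂ φ₂ φ₃ hk hb hc z hD]; simp; try ring
  have Bq2 : fderiv ℝ (fun w : E3 => (-(φ₃ (w.1 2)) * (w.2 1 ^ 2 - k₂ (w.1 1) * w.2 0 ^ 2) + w.2 0 * w.2 2) / (1 - φ₂ (w.1 1) * φ₃ (w.1 2))) z (Pi.single 2 1, 0) = (((-(deriv φ₃ (z.1 2)) * (z.2 1 ^ 2 - k₂ (z.1 1) * z.2 0 ^ 2)) * (1 - φ₂ (z.1 1) * φ₃ (z.1 2)) + (-(φ₃ (z.1 2)) * (z.2 1 ^ 2 - k₂ (z.1 1) * z.2 0 ^ 2) + z.2 0 * z.2 2) * (φ₂ (z.1 1) * deriv φ₃ (z.1 2))) / (1 - φ₂ (z.1 1) * φ₃ (z.1 2)) ^ 2) := by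
    rw [F3_apply k₂ φ₂ φ₃ hk hb hc z hD]; simp; try ring
  have Bp0 : fderiv ℝ (fun w : E3 => (-(φ₃ (w.1 2)) * (w.2 1 ^ 2 - k₂ (w.1 1) * w.2 0 ^ 2) + w.2 0 * w.2 2) / (1 - φ₂ (w.1 1) * φ₃ (w.1 2))) z (0, Pi.single 0 1) = ((2 * φ₃ (z.1 2) * k₂ (z.1 1) * z.2 0 + z.2 2) / (1 - φ₂ (z.1 1) * φ₃ (z.1 2))) := by
    rw [F3_apply k₂ φ₂ φ₃ hk hb hc z hD]; simp; try ring
  have Bp1 : fderiv ℝ (fun w : E3 => (-(φ₃ (w.1 2)) * (w.2 1 ^ 2 - k₂ (w.1 1) * w.2 0 ^ 2) + w.2 0 * w.2 2) / (1 - φ₂ (w.1 1) * φ₃ (w.1 2))) z (0, Pi.single 1 1) = ((-(2 * φ₃ (z.1 2) * z.2 1)) / (1 - φ₂ (z.1 1) * φ₃ (z.1 2))) := by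
    rw [F3_apply k₂ φ₂ φ₃ hk hb hc z hD]; simp; try ring
  have Bp2 : fderiv ℝ (fun w : E3 => (-(φ₃ (w.1 2)) * (w.2 1 ^ 2 - k₂ (w.1 1) * w.2 0 ^ 2) + w.2 0 * w.2 2) / (1 - φ₂ (w.1 1) * φ₃ (w.1 2))) z (0, Pi.single 2 1) = ((z.2 0) / (1 - φ₂ (z.1 1) * φ₃ (z.1 2))) := by
    rw [F3_apply k₂ φ₂ φ₃ hk hb hc z hD]; simp; try ring
  simp only [poissonBracket, Fin.sum_univ_three, Aq0, Aq1, Aq2, Ap0, Ap1, Ap2,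
    Bq0, Bq1, Bq2, Bp0, Bp1, Bp2]
  field_simp
  ring

/-- for the class `[1,1,1]₂` metric on `ℝ³` with inverse metric
`g^{**} = (1−φ₂(y)φ₃(z))⁻¹ [[−k₂,0,−φ₂/2],[0,1,0],[−φ₂/2,0,0]]`, the functions
`F₁ = p₁`, `F₂ = (p₂² − k₂p₁² − φ₂p₁p₃)/(1−φ₂φ₃)`, and
`F₃ = (−φ₃(p₂² − k₂p₁²) + p₁p₃)/(1−φ₂φ₃)` are pairwise in involution and `F₂ = 2H₀`
for the geodesic Hamiltonian `H₀` of `g`. -/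
theorem class_1_1_1_three_dimensions
    (φ₂ k₂ φ₃ : ℝ → ℝ)
    (hφ₂ : ContDiff ℝ (⊤ : ℕ∞) φ₂) (hk₂ : ContDiff ℝ (⊤ : ℕ∞) k₂) (hφ₃ : ContDiff ℝ (⊤ : ℕ∞) φ₃)
    (hφ₂0 : ∀ y, φ₂ y ≠ 0) (hne : ∀ y z : ℝ, φ₂ y * φ₃ z ≠ 1)
    (g : (Fin 3 → ℝ) → Matrix (Fin 3) (Fin 3) ℝ)
    (hg : ∀ q, g q = (1 - φ₂ (q 1) * φ₃ (q 2))⁻¹ •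
      !![-(k₂ (q 1)), 0, -(φ₂ (q 1)) / 2;
         0, 1, 0;
         -(φ₂ (q 1)) / 2, 0, 0])
    (F₁ F₂ F₃ H₀ : (Fin 3 → ℝ) × (Fin 3 → ℝ) → ℝ)
    (hF₁ : ∀ z, F₁ z = z.2 0)
    (hF₂ : ∀ z, F₂ z = (z.2 1 ^ 2 - k₂ (z.1 1) * z.2 0 ^ 2
        - φ₂ (z.1 1) * z.2 0 * z.2 2) / (1 - φ₂ (z.1 1) * φ₃ (z.1 2)))
    (hF₃ : ∀ z, F₃ z = (-(φ₃ (z.1 2)) * (z.2 1 ^ 2 - k₂ (z.1 1) * z.2 0 ^ 2)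
        + z.2 0 * z.2 2) / (1 - φ₂ (z.1 1) * φ₃ (z.1 2)))
    (hH₀ : ∀ z, H₀ z = (1/2) * ∑ μ, ∑ ν, g z.1 μ ν * z.2 μ * z.2 ν) :
    (∀ z, poissonBracket F₁ F₂ z = 0) ∧
    (∀ z, poissonBracket F₁ F₃ z = 0) ∧
    (∀ z, poissonBracket F₂ F₃ z = 0) ∧
    (∀ z, F₂ z = 2 * H₀ z) := by
  have hk : Differentiable ℝ k₂ := hk₂.differentiable (by simp)
  have hb : Differentiable ℝ φ₂ := hφ₂.differentiable (by simp)
  have hc : Differentiable ℝ φ₃ := hφ₃.differentiable (by simp)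
  have e1 : F₁ = fun w : E3 => w.2 0 := funext hF₁
  have e2 : F₂ = fun w : E3 => (w.2 1 ^ 2 - k₂ (w.1 1) * w.2 0 ^ 2
      - φ₂ (w.1 1) * w.2 0 * w.2 2) / (1 - φ₂ (w.1 1) * φ₃ (w.1 2)) := funext hF₂
  have e3 : F₃ = fun w : E3 => (-(φ₃ (w.1 2)) * (w.2 1 ^ 2 - k₂ (w.1 1) * w.2 0 ^ 2)
      + w.2 0 * w.2 2) / (1 - φ₂ (w.1 1) * φ₃ (w.1 2)) := funext hF₃
  have hDall : ∀ z : E3, (1 - φ₂ (z.1 1) * φ₃ (z.1 2)) ≠ 0 :=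
    fun z => sub_ne_zero.mpr (Ne.symm (hne _ _))
  refine ⟨?_, ?_, ?_, ?_⟩
  · intro z
    rw [e1, e2]
    exact bracket12 k₂ φ₂ φ₃ hk hb hc z (hDall z)
  · intro z
    rw [e1, e3]
    exact bracket13 k₂ φ₂ φ₃ hk hb hc z (hDall z)
  · intro z
    rw [e2, e3]
    exact bracket23 k₂ φ₂ φ₃ hk hb hc z (hDall z)
  · intro z
    have hD := hDall z
    rw [hF₂, hH₀]
    simp only [hg, Fin.sum_univ_three, Matrix.smul_apply, smul_eq_mul,
      Matrix.cons_val', Matrix.cons_val_zero, Matrix.cons_val_one, Matrix.head_cons,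
      Matrix.empty_val', Matrix.cons_val_fin_one, Matrix.head_fin_const,
      Matrix.cons_val_two, Matrix.tail_cons, Matrix.of_apply]
    field_simp
    ring
end
end
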